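/- Let (R, α, β, μ) be an enhanced Yang-Baxter operator, i.e. (μ⊗μ)R = R(μ⊗μ) and tr₂(R^{±1}(μ⊗μ)) = α^{±1}βμ. If f : V → V is any linear map and we set φ = δ¹_R(f) = R(f⊗1) + R(1⊗f) − (f⊗1)R − (1⊗f)R and μ₁ = μf − fμ, then tr₂(φ(μ⊗μ)) + tr₂(R(μ₁⊗μ)) + tr₂(R(μ⊗μ₁)) = αβμ₁. -/
import Mathlib


open TensorProduct

/-- Partial trace over the second tensor factor, for a finite free module `V`. -/
noncomputable def ptrace2 (k : Type*) [CommRing k] (V : Type*) [AddCommGroup V] [Module k V]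
    [Module.Free k V] [Module.Finite k V] (A : V ⊗[k] V →ₗ[k] V ⊗[k] V) : V →ₗ[k] V :=
  (TensorProduct.rid k (V →ₗ[k] V))
    ((LinearMap.lTensor (V →ₗ[k] V) (LinearMap.trace k V))
      ((homTensorHomEquiv k V V V V).symm A))

/-- The Yang-Baxter 1-differential `δ¹_R(f) = R(f⊗1) + R(1⊗f) − (f⊗1)R − (1⊗f)R`. -/
noncomputable def ybDelta1 (k : Type*) [CommRing k] (V : Type*) [AddCommGroup V] [Module k V]
    (R : V ⊗[k] V →ₗ[k] V ⊗[k] V) (f : V →ₗ[k] V) :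
    V ⊗[k] V →ₗ[k] V ⊗[k] V :=
  R ∘ₗ LinearMap.rTensor V f + R ∘ₗ LinearMap.lTensor V f
    - LinearMap.rTensor V f ∘ₗ R - LinearMap.lTensor V f ∘ₗ R

section Helpers

variable (k : Type*) [CommRing k] (V : Type*) [AddCommGroup V] [Module k V]
    [Module.Free k V] [Module.Finite k V]

lemma pt_add (A B : V ⊗[k] V →ₗ[k] V ⊗[k] V) :
    ptrace2 k V (A + B) = ptrace2 k V A + ptrace2 k V B := by simp [ptrace2]

lemma pt_sub (A B : V ⊗[k] V →ₗ[k] V ⊗[k] V) :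
    ptrace2 k V (A - B) = ptrace2 k V A - ptrace2 k V B := by simp [ptrace2]

lemma pt_map (p q : V →ₗ[k] V) :
    ptrace2 k V (TensorProduct.map p q) = (LinearMap.trace k V q) • p := by
  have h : (homTensorHomEquiv k V V V V).symm (TensorProduct.map p q) = p ⊗ₜ q := by
    apply (homTensorHomEquiv k V V V V).injective
    simp [homTensorHomEquiv_apply, homTensorHomMap_apply]
  simp [ptrace2, h]

lemma pt_rT_comp (g : V →ₗ[k] V) (A : V ⊗[k] V →ₗ[k] V ⊗[k] V) :
    ptrace2 k V (LinearMap.rTensor V g ∘ₗ A) = g ∘ₗ ptrace2 k V A := by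
  obtain ⟨x, rfl⟩ := (homTensorHomEquiv k V V V V).surjective A
  induction x using TensorProduct.induction_on with
  | zero => simp [ptrace2]
  | tmul p q =>
      rw [homTensorHomEquiv_apply, homTensorHomMap_apply]
      rw [show LinearMap.rTensor V g ∘ₗ TensorProduct.map p q
            = TensorProduct.map (g ∘ₗ p) q by
        rw [LinearMap.rTensor, ← TensorProduct.map_comp]; simp]
      simp [pt_map, LinearMap.comp_smul]
  | add a b ha hb =>
      simp only [map_add, LinearMap.comp_add, pt_add, ha, hb, LinearMap.comp_add]

lemma pt_comp_rT (g : V →ₗ[k] V) (A : V ⊗[k] V →ₗ[k] V ⊗[k] V) :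
    ptrace2 k V (A ∘ₗ LinearMap.rTensor V g) = ptrace2 k V A ∘ₗ g := by
  obtain ⟨x, rfl⟩ := (homTensorHomEquiv k V V V V).surjective A
  induction x using TensorProduct.induction_on with
  | zero => simp [ptrace2]
  | tmul p q =>
      rw [homTensorHomEquiv_apply, homTensorHomMap_apply]
      rw [show TensorProduct.map p q ∘ₗ LinearMap.rTensor V g
            = TensorProduct.map (p ∘ₗ g) q by
        rw [LinearMap.rTensor, ← TensorProduct.map_comp]; simp]
      simp [pt_map, LinearMap.smul_comp]
  | add a b ha hb =>
      simp only [map_add, LinearMap.add_comp, pt_add, ha, hb]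

lemma pt_comp_lT (h : V →ₗ[k] V) (A : V ⊗[k] V →ₗ[k] V ⊗[k] V) :
    ptrace2 k V (A ∘ₗ LinearMap.lTensor V h) = ptrace2 k V (LinearMap.lTensor V h ∘ₗ A) := by
  obtain ⟨x, rfl⟩ := (homTensorHomEquiv k V V V V).surjective A
  induction x using TensorProduct.induction_on with
  | zero => simp
  | tmul p q =>
      rw [homTensorHomEquiv_apply, homTensorHomMap_apply]
      rw [show TensorProduct.map p q ∘ₗ LinearMap.lTensor V h
            = TensorProduct.map p (q ∘ₗ h) by
        rw [LinearMap.lTensor, ← TensorProduct.map_comp]; simp]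
      rw [show LinearMap.lTensor V h ∘ₗ TensorProduct.map p q
            = TensorProduct.map p (h ∘ₗ q) by
        rw [LinearMap.lTensor, ← TensorProduct.map_comp]; simp]
      rw [pt_map, pt_map, LinearMap.trace_comp_comm']
  | add a b ha hb =>
      simp only [map_add, LinearMap.add_comp, LinearMap.comp_add, pt_add, ha, hb]

lemma map_sub_left (p q r : V →ₗ[k] V) :
    TensorProduct.map (p - q) r = TensorProduct.map p r - TensorProduct.map q r := by
  ext x y; simp [TensorProduct.sub_tmul]

lemma map_sub_right (p q r : V →ₗ[k] V) :
    TensorProduct.map p (q - r) = TensorProduct.map p q - TensorProduct.map p r := by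
  ext x y; simp [TensorProduct.tmul_sub]

end Helpers

/-- For an enhanced Yang-Baxter operator `(R, α, β, μ)` and any `f : V → V`, setting
`φ = δ¹_R(f)` and `μ₁ = μf − fμ`, we have
`tr₂(φ(μ⊗μ)) + tr₂(R(μ₁⊗μ)) + tr₂(R(μ⊗μ₁)) = αβμ₁`. -/
theorem coboundary_partial_trace (k : Type*) [CommRing k] (V : Type*) [AddCommGroup V]
    [Module k V] [Module.Free k V] [Module.Finite k V]
    (R R' : V ⊗[k] V →ₗ[k] V ⊗[k] V) (μ f : V →ₗ[k] V) (α β : kˣ)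
    (hinv : R ∘ₗ R' = LinearMap.id ∧ R' ∘ₗ R = LinearMap.id)
    (hcomm : TensorProduct.map μ μ ∘ₗ R = R ∘ₗ TensorProduct.map μ μ)
    (htrp : ptrace2 k V (R ∘ₗ TensorProduct.map μ μ) = ((α : k) * (β : k)) • μ)
    (htrm : ptrace2 k V (R' ∘ₗ TensorProduct.map μ μ) = (((α⁻¹ : kˣ) : k) * (β : k)) • μ) :
    ptrace2 k V (ybDelta1 k V R f ∘ₗ TensorProduct.map μ μ)
        + ptrace2 k V (R ∘ₗ TensorProduct.map (μ ∘ₗ f - f ∘ₗ μ) μ)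
        + ptrace2 k V (R ∘ₗ TensorProduct.map μ (μ ∘ₗ f - f ∘ₗ μ))
      = ((α : k) * (β : k)) • (μ ∘ₗ f - f ∘ₗ μ) := by
  have hmf : TensorProduct.map (μ ∘ₗ f) μ = TensorProduct.map μ μ ∘ₗ LinearMap.rTensor V f := by
    rw [LinearMap.rTensor, ← TensorProduct.map_comp]; simp
  have hfm : TensorProduct.map (f ∘ₗ μ) μ = LinearMap.rTensor V f ∘ₗ TensorProduct.map μ μ := by
    rw [LinearMap.rTensor, ← TensorProduct.map_comp]; simp
  have hmf' : TensorProduct.map μ (μ ∘ₗ f) = TensorProduct.map μ μ ∘ₗ LinearMap.lTensor V f := by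
    rw [LinearMap.lTensor, ← TensorProduct.map_comp]; simp
  have hfm' : TensorProduct.map μ (f ∘ₗ μ) = LinearMap.lTensor V f ∘ₗ TensorProduct.map μ μ := by
    rw [LinearMap.lTensor, ← TensorProduct.map_comp]; simp
  have e1 : ybDelta1 k V R f ∘ₗ TensorProduct.map μ μ
      + R ∘ₗ TensorProduct.map (μ ∘ₗ f - f ∘ₗ μ) μ
      + R ∘ₗ TensorProduct.map μ (μ ∘ₗ f - f ∘ₗ μ)
      = ((R ∘ₗ TensorProduct.map μ μ) ∘ₗ LinearMap.rTensor V f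
          - LinearMap.rTensor V f ∘ₗ (R ∘ₗ TensorProduct.map μ μ))
        + ((R ∘ₗ TensorProduct.map μ μ) ∘ₗ LinearMap.lTensor V f
          - LinearMap.lTensor V f ∘ₗ (R ∘ₗ TensorProduct.map μ μ)) := by
    simp only [ybDelta1, map_sub_left k V, map_sub_right k V, hmf, hmf',
      LinearMap.comp_sub, LinearMap.sub_comp, LinearMap.add_comp,
      LinearMap.comp_assoc, ← hfm, ← hfm']
    abel
  rw [← pt_add, ← pt_add, e1, pt_add, pt_sub, pt_sub, pt_comp_rT, pt_rT_comp, pt_comp_lT, htrp]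
  simp [LinearMap.smul_comp, LinearMap.comp_smul, smul_sub]
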